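/- The gradient of ℓ_bin(x) = N·(Σₙ xₙ⁴) − (Σₙ xₙ²)² vanishes at x ∈ ℝ^N if and only if x has all coordinates in {−α, α} for some α ∈ ℝ; equivalently, ℓ_bin has no spurious stationary points. Explicitly, ∂ℓ_bin/∂xₙ = 4xₙ(N xₙ² − Σₖ xₖ²) for each n, and these are all zero iff all xₙ² are equal. -/

import Mathlib

/-!
The partial derivatives are `4 xₙ (N xₙ² - S)` with `S = Σₖ xₖ²`, so at a stationary point every
coordinate satisfies `xₙ = 0` or `N xₙ² = S`. In either case `N xₙ² ≤ S`, while these `N` terms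
sum to exactly `N S`; hence `N xₙ² = S` for every `n`, i.e. all `xₙ²` are equal.
-/

open Finset ContinuousLinearMap

section
variable {ι : Type*} [Fintype ι]

theorem hasFDerivAt_sum_pow (m : ℕ) (x : ι → ℝ) :
    HasFDerivAt (fun y : ι → ℝ => ∑ k, y k ^ m)
      (∑ k, ((m : ℝ) * x k ^ (m - 1)) • (proj k : (ι → ℝ) →L[ℝ] ℝ)) x :=
  HasFDerivAt.fun_sum fun k _ =>
    (hasDerivAt_pow m (x k)).comp_hasFDerivAt x (hasFDerivAt_apply k x)

theorem sum_smul_proj_apply_single [DecidableEq ι] (c : ι → ℝ) (n : ι) :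
    (∑ k, c k • proj k : (ι → ℝ) →L[ℝ] ℝ) (Pi.single n 1) = c n := by
  simp [Pi.single_apply]

theorem sum_smul_proj_eq_zero_iff (c : ι → ℝ) :
    (∑ k, c k • proj k : (ι → ℝ) →L[ℝ] ℝ) = 0 ↔ ∀ n, c n = 0 := by
  classical
  refine ⟨fun h n => ?_, fun h => by simp [h]⟩
  rw [← sum_smul_proj_apply_single c n, h, zero_apply]

theorem hasFDerivAt_quartic_loss (a : ℝ) (x : ι → ℝ) :
    HasFDerivAt (fun y : ι → ℝ => a * ∑ k, y k ^ 4 - (∑ k, y k ^ 2) ^ 2)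
      (∑ k, (4 * x k * (a * x k ^ 2 - ∑ j, x j ^ 2)) • (proj k : (ι → ℝ) →L[ℝ] ℝ)) x := by
  refine (((hasFDerivAt_sum_pow 4 x).const_mul a).sub
    ((hasFDerivAt_sum_pow 2 x).pow 2)).congr_fderiv ?_
  simp only [smul_sum, smul_smul, ← sum_sub_distrib, ← sub_smul]
  refine sum_congr rfl fun k _ => ?_
  congr 1
  push_cast
  ring

theorem card_mul_sq_eq_sum_sq (x : ι → ℝ)
    (h : ∀ n, x n = 0 ∨ Fintype.card ι * x n ^ 2 = ∑ k, x k ^ 2) (n : ι) :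
    Fintype.card ι * x n ^ 2 = ∑ k, x k ^ 2 := by
  have hle : ∀ k ∈ univ, (Fintype.card ι : ℝ) * x k ^ 2 ≤ ∑ j, x j ^ 2 := fun k _ => by
    rcases h k with hk | hk
    · rw [hk, zero_pow two_ne_zero, mul_zero]
      positivity
    · exact hk.le
  have hsum : ∑ k, (Fintype.card ι : ℝ) * x k ^ 2 = ∑ _k : ι, ∑ j, x j ^ 2 := by
    rw [← mul_sum, sum_const, card_univ, nsmul_eq_mul]
  exact (sum_eq_sum_iff_of_le hle).mp hsum n (mem_univ n)

theorem forall_eq_zero_or_card_mul_sq_eq_iff (x : ι → ℝ) :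
    (∀ n, x n = 0 ∨ Fintype.card ι * x n ^ 2 = ∑ k, x k ^ 2) ↔
      ∃ α : ℝ, ∀ n, x n = -α ∨ x n = α := by
  set S := ∑ k, x k ^ 2
  constructor
  · intro h
    refine ⟨√(S / Fintype.card ι), fun n => ?_⟩
    have : Nonempty ι := ⟨n⟩
    have hcard : (Fintype.card ι : ℝ) ≠ 0 := Nat.cast_ne_zero.mpr Fintype.card_ne_zero
    have hsq : x n ^ 2 = √(S / Fintype.card ι) ^ 2 := by
      rw [Real.sq_sqrt (by positivity), eq_div_iff hcard, mul_comm]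
      exact card_mul_sq_eq_sum_sq x h n
    exact (sq_eq_sq_iff_eq_or_eq_neg.mp hsq).symm
  · rintro ⟨α, hα⟩ n
    have hsq : ∀ k, x k ^ 2 = α ^ 2 := fun k => by rcases hα k with hk | hk <;> simp [hk]
    right
    simp only [S, hsq, sum_const, card_univ, nsmul_eq_mul]

end

theorem lbin_no_spurious_stationary_points_general (N : ℕ) (x : Fin N → ℝ) :
    (∀ n, fderiv ℝ (fun y : Fin N → ℝ =>
        (N : ℝ) * (∑ k, y k ^ 4) - (∑ k, y k ^ 2) ^ 2) x (Pi.single n 1) =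
        4 * x n * ((N : ℝ) * x n ^ 2 - ∑ k, x k ^ 2)) ∧
    (fderiv ℝ (fun y : Fin N → ℝ =>
        (N : ℝ) * (∑ k, y k ^ 4) - (∑ k, y k ^ 2) ^ 2) x = 0 ↔
      ∃ α : ℝ, ∀ n, x n = -α ∨ x n = α) := by
  rw [(hasFDerivAt_quartic_loss (N : ℝ) x).fderiv, sum_smul_proj_eq_zero_iff]
  refine ⟨fun n => sum_smul_proj_apply_single _ n, ?_⟩
  simpa only [mul_eq_zero, four_ne_zero, false_or, sub_eq_zero, Fintype.card_fin] using
    forall_eq_zero_or_card_mul_sq_eq_iff x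

theorem lbin_no_spurious_stationary_points (N : ℕ) (hN : 1 ≤ N) (x : Fin N → ℝ) :
    (∀ n, fderiv ℝ (fun y : Fin N → ℝ =>
        (N : ℝ) * (∑ k, y k ^ 4) - (∑ k, y k ^ 2) ^ 2) x (Pi.single n 1) =
        4 * x n * ((N : ℝ) * x n ^ 2 - ∑ k, x k ^ 2)) ∧
    (fderiv ℝ (fun y : Fin N → ℝ =>
        (N : ℝ) * (∑ k, y k ^ 4) - (∑ k, y k ^ 2) ^ 2) x = 0 ↔
      ∃ α : ℝ, ∀ n, x n = -α ∨ x n = α) :=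
  lbin_no_spurious_stationary_points_general N x
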